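/- Let 1 ≤ p < ∞. If X has the p-Gelfand-Phillips property and Y has the Gelfand-Phillips property, then the injective tensor product X ⊗_ε Y has the p-Gelfand-Phillips property. -/

import Mathlib

open Filter Topology Metric NormedSpace Bornology ENNReal

noncomputable section

namespace NormedSpace
/-- The topological dual of a seminormed space `E`, as `NormedSpace.Dual` was defined in the
older Mathlib (now `StrongDual`, with different instance arguments). -/
abbrev Dual (𝕜 : Type*) [NontriviallyNormedField 𝕜] (E : Type*) [SeminormedAddCommGroup E]
    [NormedSpace 𝕜 E] : Type _ :=
  E →L[𝕜] 𝕜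
instance (𝕜 : Type*) [NontriviallyNormedField 𝕜] (E : Type*) [SeminormedAddCommGroup E]
    [NormedSpace 𝕜 E] : NormedSpace 𝕜 (Dual 𝕜 E) := inferInstance
instance (𝕜 : Type*) [NontriviallyNormedField 𝕜] (E : Type*) [SeminormedAddCommGroup E]
    [NormedSpace 𝕜 E] : SeminormedAddCommGroup (Dual 𝕜 E) := inferInstance
end NormedSpace

section Defs
variable {X Y : Type*} [NormedAddCommGroup X] [NormedSpace ℝ X]
  [NormedAddCommGroup Y] [NormedSpace ℝ Y]

/-- A sequence `x` in `X` is weakly `p`-summable if `(f (x n))ₙ ∈ ℓ_p` for every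
continuous linear functional `f`. -/
def WeaklyPSummable (p : ℝ≥0∞) (x : ℕ → X) : Prop :=
  ∀ f : Dual ℝ X, Memℓp (fun n => f (x n)) p

/-- A sequence is norm null if its norms tend to `0`. -/
def NormNull (x : ℕ → X) : Prop :=
  Tendsto (fun n => ‖x n‖) atTop (𝓝 0)

/-- An operator is `p`-convergent if it maps weakly `p`-summable sequences to norm
null sequences. -/
def PConvergent (p : ℝ≥0∞) (T : X →L[ℝ] Y) : Prop :=
  ∀ x : ℕ → X, WeaklyPSummable p x → NormNull fun n => T (x n)

/-- The adjoint (dual) operator `T* : Y* → X*`, `g ↦ g ∘ T`. -/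
def adjOp (T : X →L[ℝ] Y) : Dual ℝ Y →L[ℝ] Dual ℝ X :=
  (ContinuousLinearMap.compL ℝ X Y ℝ).flip T

/-- Weak convergence of a sequence to a point. -/
def WeaklyConvTo (x : ℕ → X) (a : X) : Prop :=
  ∀ f : Dual ℝ X, Tendsto (fun n => f (x n)) atTop (𝓝 (f a))

/-- A sequence is weakly Cauchy if `(f (x n))` converges for every functional `f`. -/
def WeaklyCauchySeq (x : ℕ → X) : Prop :=
  ∀ f : Dual ℝ X, ∃ l : ℝ, Tendsto (fun n => f (x n)) atTop (𝓝 l)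

/-- A set is relatively weakly compact iff every sequence in it has a subsequence
weakly convergent to a point of the space (sequential form, by Eberlein–Šmulian). -/
def RelWeaklyCompact (A : Set X) : Prop :=
  ∀ x : ℕ → X, (∀ n, x n ∈ A) →
    ∃ (a : X) (φ : ℕ → ℕ), StrictMono φ ∧ WeaklyConvTo (fun k => x (φ k)) a

/-- A set is weakly precompact if every sequence in it has a weakly Cauchy subsequence. -/
def WeaklyPrecompact (A : Set X) : Prop :=
  ∀ x : ℕ → X, (∀ n, x n ∈ A) →
    ∃ φ : ℕ → ℕ, StrictMono φ ∧ WeaklyCauchySeq (fun k => x (φ k))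

/-- A weakly compact operator: the image of the closed unit ball is relatively
weakly compact. -/
def WeaklyCompactOp (T : X →L[ℝ] Y) : Prop :=
  RelWeaklyCompact (⇑T '' closedBall 0 1)

/-- A weakly precompact operator: the image of the closed unit ball is weakly
precompact. -/
def WeaklyPrecompactOp (T : X →L[ℝ] Y) : Prop :=
  WeaklyPrecompact (⇑T '' closedBall 0 1)

/-- `g n → 0` uniformly on `A`. -/
def UnifNullOn (g : ℕ → X → ℝ) (A : Set X) : Prop :=
  ∀ ε > (0 : ℝ), ∃ N, ∀ n ≥ N, ∀ a ∈ A, |g n a| ≤ ε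

/-- A weakly-`p`-Dunford-Pettis subset of `X`: bounded, and every weakly `p`-summable
sequence in `X*` tends to `0` uniformly on it. -/
def WeaklyPDP (p : ℝ≥0∞) (A : Set X) : Prop :=
  IsBounded A ∧
    ∀ f : ℕ → Dual ℝ X, WeaklyPSummable p f → UnifNullOn (fun n a => f n a) A

/-- A weakly-`p`-L-subset of `X*`: bounded, and every weakly `p`-summable sequence
in `X` tends to `0` uniformly on it. -/
def WeaklyPLSet (p : ℝ≥0∞) (A : Set (Dual ℝ X)) : Prop :=
  IsBounded A ∧
    ∀ x : ℕ → X, WeaklyPSummable p x → UnifNullOn (fun n g => g (x n)) A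

/-- A weakly-`p`-Cauchy sequence. -/
def WeaklyPCauchy (p : ℝ≥0∞) (x : ℕ → X) : Prop :=
  ∀ φ ψ : ℕ → ℕ, StrictMono φ → StrictMono ψ →
    WeaklyPSummable p fun k => x (φ k) - x (ψ k)

/-- A weakly-`p`-precompact set: every sequence in it has a weakly-`p`-Cauchy
subsequence. -/
def WeaklyPPrecompact (p : ℝ≥0∞) (A : Set X) : Prop :=
  ∀ x : ℕ → X, (∀ n, x n ∈ A) →
    ∃ φ : ℕ → ℕ, StrictMono φ ∧ WeaklyPCauchy p fun k => x (φ k)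

/-- A weakly-`p`-precompact operator. -/
def WeaklyPPrecompactOp (p : ℝ≥0∞) (T : X →L[ℝ] Y) : Prop :=
  WeaklyPPrecompact p (⇑T '' closedBall 0 1)

/-- A `w*`-null sequence of functionals. -/
def WStarNull (f : ℕ → Dual ℝ X) : Prop :=
  ∀ x : X, Tendsto (fun n => f n x) atTop (𝓝 0)

/-- A limited subset of `X`: every `w*`-null sequence in `X*` tends to `0`
uniformly on it. -/
def LimitedSet (A : Set X) : Prop :=
  ∀ f : ℕ → Dual ℝ X, WStarNull f → UnifNullOn (fun n a => f n a) A

/-- A weakly unconditionally convergent (wuc) series. -/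
def WUC (x : ℕ → X) : Prop :=
  ∀ f : Dual ℝ X, Summable fun n => |f (x n)|

/-- An unconditionally converging operator: maps wuc series to unconditionally
convergent series. -/
def UncondConverging (T : X →L[ℝ] Y) : Prop :=
  ∀ x : ℕ → X, WUC x → Summable fun n => T (x n)

/-- A `V*`-subset of `X`. -/
def VStarSet (A : Set X) : Prop :=
  IsBounded A ∧ ∀ f : ℕ → Dual ℝ X, WUC f → UnifNullOn (fun n a => f n a) A

/-- `w*`-to-`w` continuity of an operator `T : X* → Y`, in the equivalent algebraic
form: for every `g ∈ Y*` the functional `g ∘ T` on `X*` is given by evaluation at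
a point of `X`. -/
def WStarToWCont (T : Dual ℝ X →L[ℝ] Y) : Prop :=
  ∀ g : Dual ℝ Y, ∃ x : X, ∀ f : Dual ℝ X, g (T f) = f x

end Defs

section SpaceProps
variable (p : ℝ≥0∞) (X : Type*) [NormedAddCommGroup X] [NormedSpace ℝ X]

/-- The Gelfand-Phillips property: every limited subset is relatively compact. -/
def GPspace : Prop :=
  ∀ A : Set X, Bornology.IsBounded A → LimitedSet A → IsCompact (closure A)

/-- The `p`-Gelfand-Phillips property: every limited weakly `p`-summable sequence is
norm null. -/
def pGP : Prop :=
  ∀ x : ℕ → X, LimitedSet (Set.range x) → WeaklyPSummable p x → NormNull x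

/-- Property `RDP_p`: every weakly-`p`-L-subset of `X*` is relatively weakly compact. -/
def RDPp : Prop :=
  ∀ A : Set (Dual ℝ X), WeaklyPLSet p A → RelWeaklyCompact A

/-- The Schur property. -/
def SchurSpace : Prop :=
  ∀ (x : ℕ → X) (a : X), WeaklyConvTo x a → Tendsto x atTop (𝓝 a)

/-- Weak sequential completeness. -/
def WeaklySeqComplete : Prop :=
  ∀ x : ℕ → X, WeaklyCauchySeq x → ∃ a : X, WeaklyConvTo x a

/-- Pełczyński's property (V). -/
def PropertyV : Prop :=
  ∀ (Y : Type) [NormedAddCommGroup Y] [NormedSpace ℝ Y] [CompleteSpace Y],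
    ∀ T : X →L[ℝ] Y, UncondConverging T → WeaklyCompactOp T

/-- Property (V*). -/
def PropertyVStar : Prop :=
  ∀ A : Set X, VStarSet A → RelWeaklyCompact A

/-- Reflexivity of a normed space: the canonical embedding into the double dual is
surjective. -/
def ReflexiveSpace : Prop :=
  Function.Surjective (NormedSpace.inclusionInDoubleDual ℝ X)

end SpaceProps

section Embeds
/-- `Z` embeds isomorphically into `W`. -/
def EmbedsIn (Z W : Type*) [NormedAddCommGroup Z] [NormedSpace ℝ Z]
    [NormedAddCommGroup W] [NormedSpace ℝ W] : Prop :=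
  ∃ f : Z →L[ℝ] W, ∃ c > (0 : ℝ), ∀ z : Z, c * ‖z‖ ≤ ‖f z‖

end Embeds
/-- The injective tensor product `X ⊗_ε Y`, realized as the closed linear span of the
rank-one operators `x ⊗ y : x* ↦ x*(x) • y` inside the operator space `L(X*, Y)`. -/
noncomputable def injTensor (X Y : Type*) [NormedAddCommGroup X] [NormedSpace ℝ X]
    [NormedAddCommGroup Y] [NormedSpace ℝ Y] : Submodule ℝ (Dual ℝ X →L[ℝ] Y) :=
  (Submodule.span ℝ
    {T : Dual ℝ X →L[ℝ] Y | ∃ (x : X) (y : Y), ∀ f : Dual ℝ X, T f = f x • y}).topologicalClosure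

/-! If `(uₙ)` is limited and weakly `p`-summable in `X ⊗_ε Y ⊆ L(X*, Y)`, then for every
`y* ∈ Y*` the map `u ↦ y* ∘ u` is a bounded operator into `X` (it is so on rank-one tensors, and
`X` is closed in `X**`), so `(y* ∘ uₙ)` is limited and weakly `p`-summable in `X`, hence norm null.
The set `{uₙ x* : n, ‖x*‖ ≤ 1}` is limited in `Y`, hence relatively compact; on a compact set the
norm is controlled by finitely many norming functionals, which gives `‖uₙ‖ → 0`. -/

theorem unifNullOn_iff_forall_tendsto {E : Type*} {g : ℕ → E → ℝ} {A : Set E} :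
    UnifNullOn g A ↔
      ∀ a : ℕ → E, (∀ k, a k ∈ A) → Tendsto (fun k => g k (a k)) atTop (𝓝 0) := by
  constructor
  · intro h a ha
    refine Metric.tendsto_atTop.2 fun ε hε => ?_
    obtain ⟨N, hN⟩ := h (ε / 2) (half_pos hε)
    refine ⟨N, fun k hk => ?_⟩
    rw [Real.dist_eq, sub_zero]
    exact (hN k hk _ (ha k)).trans_lt (half_lt_self hε)
  · intro h ε hε
    by_contra! hbad
    obtain ⟨-, -, a₀, ha₀, -⟩ := hbad 0
    -- At each index pick a point of `A` where `|g k|` exceeds `ε`, if there is one.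
    have hpick : ∀ k, ∃ a ∈ A, (∃ b ∈ A, ε < |g k b|) → ε < |g k a| := fun k => by
      by_cases hk : ∃ b ∈ A, ε < |g k b|
      · obtain ⟨b, hb, hgb⟩ := hk
        exact ⟨b, hb, fun _ => hgb⟩
      · exact ⟨a₀, ha₀, fun h' => absurd h' hk⟩
    choose a ha hbig using hpick
    obtain ⟨N, hN⟩ := Metric.tendsto_atTop.1 (h a ha) ε hε
    obtain ⟨n, hn, b, hb, hgb⟩ := hbad N
    have hsmall := hN n hn
    rw [Real.dist_eq, sub_zero] at hsmall
    exact (hbig n ⟨b, hb, hgb⟩).not_gt hsmall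

section Sequences

variable {E F : Type*} [NormedAddCommGroup E] [NormedSpace ℝ E]
  [NormedAddCommGroup F] [NormedSpace ℝ F]

theorem LimitedSet.image {A : Set E} (hA : LimitedSet A) (T : E →L[ℝ] F) :
    LimitedSet (T '' A) := by
  intro f hf ε hε
  obtain ⟨N, hN⟩ := hA (fun k => (f k).comp T) (fun e => hf (T e)) ε hε
  exact ⟨N, fun k hk _ ⟨a, ha, hTa⟩ => hTa ▸ hN k hk a ha⟩

theorem WeaklyPSummable.map {p : ℝ≥0∞} {x : ℕ → E} (hx : WeaklyPSummable p x) (T : E →L[ℝ] F) :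
    WeaklyPSummable p (T ∘ x) :=
  fun f => hx (f.comp T)

theorem WeaklyPSummable.isBounded_range {p : ℝ≥0∞} {x : ℕ → E} (hx : WeaklyPSummable p x) :
    IsBounded (Set.range x) := by
  have hpt : ∀ f : Dual ℝ E, ∃ C, ∀ n, ‖inclusionInDoubleDual ℝ E (x n) f‖ ≤ C := fun f => by
    obtain ⟨C, hC⟩ := memℓp_infty_iff.1 ((hx f).of_exponent_ge le_top)
    exact ⟨C, fun n => hC ⟨n, rfl⟩⟩
  obtain ⟨C, hC⟩ := banach_steinhaus hpt
  refine isBounded_iff_forall_norm_le.2 ⟨C, ?_⟩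
  rintro _ ⟨n, rfl⟩
  rw [← (inclusionInDoubleDualLi (E := E) ℝ).norm_map]
  exact hC n

theorem WStarNull.exists_norm_le [CompleteSpace E] {f : ℕ → Dual ℝ E} (hf : WStarNull f) :
    ∃ C, ∀ k, ‖f k‖ ≤ C :=
  banach_steinhaus fun e => by
    obtain ⟨C, hC⟩ := (hf e).norm.bddAbove_range
    exact ⟨C, fun k => hC ⟨k, rfl⟩⟩

theorem exists_lift_inclusionInDoubleDual (Φ : F →L[ℝ] Dual ℝ (Dual ℝ E))
    (hΦ : ∀ z, Φ z ∈ Set.range (inclusionInDoubleDual ℝ E)) :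
    ∃ R : F →L[ℝ] E, ∀ z, inclusionInDoubleDual ℝ E (R z) = Φ z := by
  choose R hR using hΦ
  have hJ : Function.Injective (inclusionInDoubleDual ℝ E) := (inclusionInDoubleDualLi ℝ).injective
  let R' : F →ₗ[ℝ] E :=
    { toFun := R
      map_add' := fun a b => hJ (by simp [hR])
      map_smul' := fun c a => hJ (by simp [hR]) }
  refine ⟨R'.mkContinuous ‖Φ‖ fun z => ?_, hR⟩
  calc ‖R z‖ = ‖Φ z‖ := by rw [← hR, ← (inclusionInDoubleDualLi (E := E) ℝ).norm_map]; rfl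
    _ ≤ ‖Φ‖ * ‖z‖ := Φ.le_opNorm z

theorem tendsto_opNorm_zero_of_mapsTo_isCompact {T : ℕ → E →L[ℝ] F} {K : Set F}
    (hK : IsCompact K) (hTK : ∀ n, Set.MapsTo (T n) (closedBall 0 1) K)
    (hw : ∀ g : Dual ℝ F, Tendsto (fun n => ‖g.comp (T n)‖) atTop (𝓝 0)) :
    Tendsto (fun n => ‖T n‖) atTop (𝓝 0) := by
  refine Metric.tendsto_nhds.2 fun ε hε => ?_
  have hδ : 0 < ε / 4 := by positivity
  obtain ⟨t, -, hcover⟩ := hK.elim_nhds_subcover (fun y => ball y (ε / 4))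
    fun y _ => ball_mem_nhds y hδ
  choose g hg1 hgy using fun y : F => exists_dual_vector'' ℝ y
  simp only [RCLike.ofReal_real_eq_id, id] at hgy
  have hsmall : ∀ᶠ n in atTop, ∀ y ∈ t, ‖(g y).comp (T n)‖ < ε / 4 :=
    t.eventually_all.2 fun y _ => (hw (g y)).eventually (gt_mem_nhds hδ)
  filter_upwards [hsmall] with n hn
  -- A point of `K` is within `ε / 4` of some `y ∈ t`, and `‖y‖` is seen by the functional `g y`.
  have hunit : ∀ e, ‖e‖ = 1 → ‖T n e‖ ≤ 3 * (ε / 4) := fun e he => by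
    obtain ⟨y, hyt, hy⟩ := Set.mem_iUnion₂.1 (hcover (hTK n (mem_closedBall_zero_iff.2 he.le)))
    rw [mem_ball, dist_eq_norm] at hy
    have hgdiff : ‖g y (y - T n e)‖ ≤ ε / 4 := ((g y).le_opNorm _).trans <| by
      rw [norm_sub_rev]
      nlinarith [hg1 y, norm_nonneg (g y), norm_nonneg (T n e - y)]
    rw [map_sub, Real.norm_eq_abs] at hgdiff
    have hgT : |g y (T n e)| ≤ ε / 4 := by
      have := ((g y).comp (T n)).le_opNorm e
      rw [he, mul_one, ContinuousLinearMap.comp_apply, Real.norm_eq_abs] at this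
      linarith [hn y hyt]
    calc ‖T n e‖ ≤ ‖y‖ + ‖T n e - y‖ := norm_le_norm_add_norm_sub' _ _
      _ ≤ g y y + ε / 4 := by rw [hgy y]; linarith
      _ ≤ 3 * (ε / 4) := by linarith [abs_le.1 hgdiff, abs_le.1 hgT]
  rw [Real.dist_eq, sub_zero, abs_norm]
  linarith [ContinuousLinearMap.opNorm_le_of_unit_norm (by positivity) hunit]

end Sequences

section InjectiveTensor

variable {X Y : Type*} [NormedAddCommGroup X] [NormedSpace ℝ X]
  [NormedAddCommGroup Y] [NormedSpace ℝ Y]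

theorem injTensor_le_of_isClosed {N : Submodule ℝ (Dual ℝ X →L[ℝ] Y)}
    (hN : IsClosed (N : Set (Dual ℝ X →L[ℝ] Y)))
    (hgen : ∀ (x : X) (y : Y) (T : Dual ℝ X →L[ℝ] Y), (∀ f, T f = f x • y) → T ∈ N) :
    injTensor X Y ≤ N :=
  Submodule.topologicalClosure_minimal _ (Submodule.span_le.2 fun T ⟨x, y, hT⟩ => hgen x y T hT) hN

theorem exists_inclusionInDoubleDual_eq_comp [CompleteSpace X] (g : Dual ℝ Y) :
    ∃ R : injTensor X Y →L[ℝ] X,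
      ∀ u, inclusionInDoubleDual ℝ X (R u) = g.comp (u : Dual ℝ X →L[ℝ] Y) := by
  let N : Submodule ℝ (Dual ℝ X →L[ℝ] Y) :=
    (LinearMap.range (inclusionInDoubleDual ℝ X).toLinearMap).comap
      (ContinuousLinearMap.compL ℝ (Dual ℝ X) Y ℝ g).toLinearMap
  have hclosed : IsClosed (Set.range (inclusionInDoubleDual ℝ X)) :=
    (inclusionInDoubleDualLi (E := X) ℝ).isometry.isUniformInducing.isComplete_range.isClosed
  have hle : injTensor X Y ≤ N := by
    refine injTensor_le_of_isClosed (hclosed.preimage (ContinuousLinearMap.continuous _))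
      fun x y T hT => ⟨g y • x, ?_⟩
    ext f
    simp [hT, dual_def, mul_comm]
  let Φ : injTensor X Y →L[ℝ] Dual ℝ (Dual ℝ X) :=
    (ContinuousLinearMap.compL ℝ (Dual ℝ X) Y ℝ g).comp (injTensor X Y).subtypeL
  exact exists_lift_inclusionInDoubleDual Φ fun u : injTensor X Y => hle u.2

theorem tendsto_apply_apply_of_wStarNull [CompleteSpace Y] {f : ℕ → Dual ℝ X} {C : ℝ}
    (hf : ∀ k, ‖f k‖ ≤ C) {g : ℕ → Dual ℝ Y} (hg : WStarNull g) (u : injTensor X Y) :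
    Tendsto (fun k => g k ((u : Dual ℝ X →L[ℝ] Y) (f k))) atTop (𝓝 0) := by
  obtain ⟨D, hD⟩ := hg.exists_norm_le
  have hC : 0 ≤ C := (norm_nonneg _).trans (hf 0)
  have hD0 : 0 ≤ D := (norm_nonneg _).trans (hD 0)
  let Φ : ℕ → (Dual ℝ X →L[ℝ] Y) →L[ℝ] ℝ := fun k =>
    (g k).comp (ContinuousLinearMap.apply ℝ Y (f k))
  have hΦ : ∀ k, LipschitzWith (D * C).toNNReal (Φ k) := fun k =>
    ContinuousLinearMap.lipschitzWith_of_opNorm_le <| by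
      refine ((Φ k).opNorm_le_bound (mul_nonneg hD0 hC) fun T => ?_).trans (Real.le_coe_toNNReal _)
      calc ‖g k (T (f k))‖ ≤ ‖g k‖ * (‖T‖ * ‖f k‖) := (g k).le_opNorm_of_le (T.le_opNorm _)
        _ ≤ D * (‖T‖ * C) := by gcongr; exacts [hD k, hf k]
        _ = D * C * ‖T‖ := by ring
  let N : Submodule ℝ (Dual ℝ X →L[ℝ] Y) :=
    { carrier := {T | Tendsto (fun k => Φ k T) atTop (𝓝 0)}
      zero_mem' := by simp
      add_mem' := fun ha hb => by simpa using ha.add hb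
      smul_mem' := fun c _ ha => by simpa using ha.const_smul c }
  have hN : IsClosed (N : Set (Dual ℝ X →L[ℝ] Y)) :=
    (LipschitzWith.uniformEquicontinuous _ _ hΦ).equicontinuous.isClosed_setOfPred_tendsto
      continuous_const
  have hgen : ∀ (x : X) (y : Y) (T : Dual ℝ X →L[ℝ] Y), (∀ f, T f = f x • y) → T ∈ N := by
    intro x y T hT
    show Tendsto (fun k => g k (T (f k))) atTop (𝓝 0)
    simp only [hT, map_smul, smul_eq_mul]
    refine bdd_le_mul_tendsto_zero' (C * ‖x‖) (Eventually.of_forall fun k => ?_) (hg y)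
    rw [← Real.norm_eq_abs]
    exact (f k).le_of_opNorm_le (hf k) x
  exact injTensor_le_of_isClosed hN hgen u.2

theorem LimitedSet.image2_apply_closedBall [CompleteSpace Y] {A : Set (injTensor X Y)}
    (hA : LimitedSet A) :
    LimitedSet (Set.image2 (fun T f => T f) ((↑) '' A : Set (Dual ℝ X →L[ℝ] Y))
      (closedBall (0 : Dual ℝ X) 1)) := by
  intro g hg
  refine unifNullOn_iff_forall_tendsto.2 fun b hb => ?_
  choose T hT f hf hTf using hb
  choose u hu huT using hT
  let Ψ : ℕ → Dual ℝ (injTensor X Y) := fun k =>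
    ((g k).comp (ContinuousLinearMap.apply ℝ Y (f k))).comp (injTensor X Y).subtypeL
  have hΨ : WStarNull (X := injTensor X Y) Ψ :=
    tendsto_apply_apply_of_wStarNull (fun k => mem_closedBall_zero_iff.1 (hf k)) hg
  convert unifNullOn_iff_forall_tendsto.1 (hA _ hΨ) u hu using 2 with k
  rw [← hTf, ← huT]
  rfl

end InjectiveTensor

theorem stmt_17_general {X Y : Type*} [NormedAddCommGroup X] [NormedSpace ℝ X] [CompleteSpace X]
    [NormedAddCommGroup Y] [NormedSpace ℝ Y] [CompleteSpace Y]
    (p : ℝ≥0∞) (hX : pGP p X) (hY : GPspace Y) :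
    pGP p ↥(injTensor X Y) := by
  intro u hLim hSum
  set S := Set.image2 (fun T f => T f) ((↑) '' Set.range u : Set (Dual ℝ X →L[ℝ] Y))
    (closedBall (0 : Dual ℝ X) 1)
  have hS_bdd : IsBounded S := by
    rw [← NormedSpace.isVonNBounded_iff ℝ]
    refine ContinuousLinearMap.isVonNBounded_image2_apply ?_
      ((NormedSpace.isVonNBounded_iff ℝ).2 isBounded_closedBall)
    exact (NormedSpace.isVonNBounded_iff ℝ).2
      (isBounded_image_subtype_val.2 hSum.isBounded_range)
  have hS_cpt : IsCompact (closure S) := hY S hS_bdd hLim.image2_apply_closedBall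
  refine tendsto_opNorm_zero_of_mapsTo_isCompact (T := fun n => (u n : Dual ℝ X →L[ℝ] Y)) hS_cpt
    (fun n f hf => subset_closure (Set.mem_image2_of_mem ⟨u n, ⟨n, rfl⟩, rfl⟩ hf)) fun g => ?_
  obtain ⟨R, hR⟩ := exists_inclusionInDoubleDual_eq_comp (X := X) g
  have hRu : NormNull (R ∘ u) := hX _ (by rw [Set.range_comp]; exact hLim.image R) (hSum.map R)
  have hnorm : ∀ n, ‖R (u n)‖ = ‖g.comp (u n : Dual ℝ X →L[ℝ] Y)‖ := fun n => by
    rw [← hR]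
    exact ((inclusionInDoubleDualLi (E := X) ℝ).norm_map _).symm
  simpa only [NormNull, Function.comp_apply, hnorm] using hRu

/-- For `1 ≤ p < ∞`, if `X` has the `p`-Gelfand-Phillips property and
`Y` has the Gelfand-Phillips property, then `X ⊗_ε Y` has the `p`-Gelfand-Phillips
property. -/
theorem stmt_17 {X Y : Type*} [NormedAddCommGroup X] [NormedSpace ℝ X] [CompleteSpace X]
    [NormedAddCommGroup Y] [NormedSpace ℝ Y] [CompleteSpace Y]
    (p : ℝ≥0∞) (hp : 1 ≤ p) (hp' : p ≠ ⊤)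
    (hX : pGP p X) (hY : GPspace Y) :
    pGP p ↥(injTensor X Y) :=
  stmt_17_general p hX hY
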